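/- arXiv:1810.08176 — 4 statements merged into one kernel-verified Lean document; each statement's English description precedes it below -/
import Mathlib

section
/- Let (C, d, U, D₁, D₂) be a Floer datum over a field Λ and let (Ĉ, d̂, X̂) be as defined in the context. Then d̂ ∘ d̂ = 0 and X̂ ∘ d̂ = d̂ ∘ X̂. Consequently the homology Ĥ := ker d̂ / im d̂ is a module over the polynomial ring Λ[x], with x acting through the map induced by X̂. -/
noncomputable section

variable (Λ : Type*) (V : Type*) [Field Λ] [AddCommGroup V] [Module Λ V]

/-- A Floer datum over the field `Λ`. -/
structure FloerDatum where
  gr : ZMod 8 → Submodule Λ V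
  internal : DirectSum.IsInternal gr
  d : V →ₗ[Λ] V
  U : V →ₗ[Λ] V
  D₁ : V →ₗ[Λ] Λ
  D₂ : Λ →ₗ[Λ] V
  d_mem : ∀ (i : ZMod 8), ∀ v ∈ gr i, d v ∈ gr (i - 1)
  U_mem : ∀ (i : ZMod 8), ∀ v ∈ gr i, U v ∈ gr (i - 4)
  D₁_vanish : ∀ (i : ZMod 8), i ≠ 1 → ∀ v ∈ gr i, D₁ v = 0
  D₂_mem : ∀ a : Λ, D₂ a ∈ gr 4
  d_d : d ∘ₗ d = 0
  D₁_d : D₁ ∘ₗ d = 0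
  d_D₂ : d ∘ₗ D₂ = 0
  U_rel : U ∘ₗ d - d ∘ₗ U + D₂ ∘ₗ D₁ = 0

variable {Λ V}
variable {W : Type*} [AddCommGroup W] [Module Λ W]

/-- `p = Σ aᵢ xⁱ ↦ Σ f i aᵢ`, as a linear map on polynomials. -/
def polySum (f : ℕ → (Λ →ₗ[Λ] W)) : Polynomial Λ →ₗ[Λ] W where
  toFun p := p.sum fun i a => f i a
  map_add' p q :=
    Polynomial.sum_add_index p q _ (fun i => map_zero (f i)) (fun i b c => map_add (f i) b c)
  map_smul' a p := by
    show (a • p).sum (fun i b => f i b) = a • p.sum fun i b => f i b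
    rw [Polynomial.sum_smul_index p a _ (fun i => map_zero (f i)),
      Polynomial.sum, Polynomial.sum, Finset.smul_sum]
    exact Finset.sum_congr rfl fun n _ => by rw [← smul_eq_mul, map_smul]

/-- The differential `d̂` on `Ĉ = C ⊕ Λ[x]`,
`d̂(α, Σ aᵢ xⁱ) = (d α - Σ Uⁱ(D₂ aᵢ), 0)`. -/
def hatd (F : FloerDatum Λ V) : (V × Polynomial Λ) →ₗ[Λ] (V × Polynomial Λ) :=
  ((F.d ∘ₗ LinearMap.fst Λ V (Polynomial Λ))
    - (polySum fun i => (F.U ^ i) ∘ₗ F.D₂) ∘ₗ LinearMap.snd Λ V (Polynomial Λ)).prod 0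

/-- The map `X̂(α, p) = (U α, D₁ α + x·p)` on `Ĉ`. -/
def hatX (F : FloerDatum Λ V) : (V × Polynomial Λ) →ₗ[Λ] (V × Polynomial Λ) :=
  (F.U ∘ₗ LinearMap.fst Λ V (Polynomial Λ)).prod
    ((Algebra.linearMap Λ (Polynomial Λ)) ∘ₗ F.D₁ ∘ₗ LinearMap.fst Λ V (Polynomial Λ)
      + (LinearMap.mulLeft Λ (Polynomial.X : Polynomial Λ)) ∘ₗ LinearMap.snd Λ V (Polynomial Λ))

/-- The homology `Ĥ = ker d̂ / im d̂`. -/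
abbrev HatHomology (F : FloerDatum Λ V) :=
  LinearMap.ker (hatd F) ⧸
    ((LinearMap.range (hatd F)).comap (LinearMap.ker (hatd F)).subtype)

namespace FloerAux

variable (F : FloerDatum Λ V)

lemma UjD₂_mem (j : ℕ) (a : Λ) :
    (F.U ^ j) (F.D₂ a) ∈ F.gr 4 ∨ (F.U ^ j) (F.D₂ a) ∈ F.gr 0 := by
  induction j with
  | zero => left; simpa using F.D₂_mem a
  | succ n ih =>
    rw [pow_succ', Module.End.mul_apply]
    rcases ih with h | h
    · right
      have := F.U_mem 4 _ h
      rwa [show ((4 : ZMod 8) - 4) = 0 from by decide] at this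
    · left
      have := F.U_mem 0 _ h
      rwa [show ((0 : ZMod 8) - 4) = 4 from by decide] at this

lemma D₁_UjD₂ (j : ℕ) (a : Λ) : F.D₁ ((F.U ^ j) (F.D₂ a)) = 0 := by
  rcases UjD₂_mem F j a with h | h
  · exact F.D₁_vanish 4 (by decide) _ h
  · exact F.D₁_vanish 0 (by decide) _ h

lemma U_rel' (v : V) : F.d (F.U v) = F.U (F.d v) + F.D₂ (F.D₁ v) := by
  have h := LinearMap.ext_iff.mp F.U_rel v
  simp only [LinearMap.add_apply, LinearMap.sub_apply, LinearMap.comp_apply,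
    LinearMap.zero_apply] at h
  linear_combination (norm := module) -h

lemma d_UjD₂ (j : ℕ) (a : Λ) : F.d ((F.U ^ j) (F.D₂ a)) = 0 := by
  induction j with
  | zero => simpa using LinearMap.ext_iff.mp F.d_D₂ a
  | succ n ih =>
    rw [pow_succ', Module.End.mul_apply, U_rel', ih, D₁_UjD₂, map_zero, map_zero, add_zero]

lemma d_polySum (p : Polynomial Λ) :
    F.d (polySum (fun i => (F.U ^ i) ∘ₗ F.D₂) p) = 0 := by
  show F.d (p.sum fun i a => ((F.U ^ i) ∘ₗ F.D₂) a) = 0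
  rw [Polynomial.sum, map_sum]
  exact Finset.sum_eq_zero fun n _ => d_UjD₂ F n _

lemma D₁_polySum (p : Polynomial Λ) :
    F.D₁ (polySum (fun i => (F.U ^ i) ∘ₗ F.D₂) p) = 0 := by
  show F.D₁ (p.sum fun i a => ((F.U ^ i) ∘ₗ F.D₂) a) = 0
  rw [Polynomial.sum, map_sum]
  exact Finset.sum_eq_zero fun n _ => D₁_UjD₂ F n _

lemma polySum_monomial {W : Type*} [AddCommGroup W] [Module Λ W]
    (f : ℕ → (Λ →ₗ[Λ] W)) (n : ℕ) (a : Λ) :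
    polySum f (Polynomial.monomial n a) = f n a :=
  Polynomial.sum_monomial_index a _ (map_zero (f n))

lemma polySum_X_mul (p : Polynomial Λ) :
    polySum (fun i => (F.U ^ i) ∘ₗ F.D₂) (Polynomial.X * p)
      = F.U (polySum (fun i => (F.U ^ i) ∘ₗ F.D₂) p) := by
  have h : (polySum (fun i => (F.U ^ i) ∘ₗ F.D₂)) ∘ₗ
      (LinearMap.mulLeft Λ (Polynomial.X : Polynomial Λ))
      = F.U ∘ₗ polySum (fun i => (F.U ^ i) ∘ₗ F.D₂) := by
    apply Polynomial.lhom_ext'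
    intro n
    apply LinearMap.ext
    intro a
    simp only [LinearMap.comp_apply, LinearMap.mulLeft_apply, Polynomial.X_mul_monomial,
      polySum_monomial, pow_succ', Module.End.mul_apply]
  exact LinearMap.ext_iff.mp h p

lemma polySum_C (c : Λ) :
    polySum (fun i => (F.U ^ i) ∘ₗ F.D₂) (Polynomial.C c) = F.D₂ c := by
  rw [← Polynomial.monomial_zero_left, polySum_monomial]
  simp

end FloerAux

open FloerAux in
/-- `d̂ ∘ d̂ = 0` and `X̂ ∘ d̂ = d̂ ∘ X̂`; consequently the homology `Ĥ = ker d̂ / im d̂` is a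
module over `Λ[x]`, with `x` acting through the `Λ`-linear endomorphism induced by `X̂`. -/
theorem stmt_1 (F : FloerDatum Λ V) :
    hatd F ∘ₗ hatd F = 0 ∧
    hatX F ∘ₗ hatd F = hatd F ∘ₗ hatX F ∧
    ∃ (hker : ∀ w ∈ LinearMap.ker (hatd F), hatX F w ∈ LinearMap.ker (hatd F))
      (xstar : HatHomology F →ₗ[Λ] HatHomology F),
      ∀ w : LinearMap.ker (hatd F),
        xstar (Submodule.Quotient.mk w) =
          Submodule.Quotient.mk (⟨hatX F w, hker w.1 w.2⟩ : LinearMap.ker (hatd F)) := by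
  have hatd_apply : ∀ (α : V) (p : Polynomial Λ),
      hatd F (α, p) = (F.d α - polySum (fun i => (F.U ^ i) ∘ₗ F.D₂) p, 0) := fun α p => rfl
  have hatX_apply : ∀ (α : V) (p : Polynomial Λ),
      hatX F (α, p) = (F.U α, Polynomial.C (F.D₁ α) + Polynomial.X * p) := fun α p => rfl
  have hdd : hatd F ∘ₗ hatd F = 0 := by
    apply LinearMap.ext
    rintro ⟨α, p⟩
    have hdα : F.d (F.d α) = 0 := by
      simpa using LinearMap.ext_iff.mp F.d_d α
    rw [LinearMap.comp_apply, hatd_apply, hatd_apply, LinearMap.zero_apply]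
    rw [map_sub, hdα, d_polySum, map_zero]
    simp
  have hcomm : hatX F ∘ₗ hatd F = hatd F ∘ₗ hatX F := by
    apply LinearMap.ext
    rintro ⟨α, p⟩
    rw [LinearMap.comp_apply, LinearMap.comp_apply, hatd_apply, hatX_apply, hatX_apply,
      hatd_apply]
    have h1 : F.D₁ (F.d α - polySum (fun i => (F.U ^ i) ∘ₗ F.D₂) p) = 0 := by
      rw [map_sub, D₁_polySum, sub_zero]
      simpa using LinearMap.ext_iff.mp F.D₁_d α
    refine Prod.ext ?_ ?_
    · show F.U (F.d α - polySum (fun i => (F.U ^ i) ∘ₗ F.D₂) p)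
        = F.d (F.U α) - polySum (fun i => (F.U ^ i) ∘ₗ F.D₂)
            (Polynomial.C (F.D₁ α) + Polynomial.X * p)
      rw [map_add, polySum_C, polySum_X_mul, U_rel', map_sub]
      abel
    · show Polynomial.C (F.D₁ (F.d α - polySum (fun i => (F.U ^ i) ∘ₗ F.D₂) p))
        + Polynomial.X * 0 = 0
      rw [h1]
      simp
  refine ⟨hdd, hcomm, ?_⟩
  have hker : ∀ w ∈ LinearMap.ker (hatd F), hatX F w ∈ LinearMap.ker (hatd F) := by
    intro w hw
    simp only [LinearMap.mem_ker] at hw ⊢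
    rw [← LinearMap.comp_apply, ← hcomm, LinearMap.comp_apply, hw, map_zero]
  refine ⟨hker, ?_⟩
  set N := ((LinearMap.range (hatd F)).comap (LinearMap.ker (hatd F)).subtype) with hNdef
  set f : LinearMap.ker (hatd F) →ₗ[Λ] LinearMap.ker (hatd F) := (hatX F).restrict hker with hf
  have hN : N ≤ N.comap f := by
    intro x hx
    simp only [hNdef, Submodule.mem_comap, LinearMap.mem_range, Submodule.coe_subtype] at hx ⊢
    obtain ⟨y, hy⟩ := hx
    refine ⟨hatX F y, ?_⟩
    rw [← LinearMap.comp_apply, ← hcomm, LinearMap.comp_apply, hy]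
    rfl
  refine ⟨Submodule.mapQ N N f hN, ?_⟩
  intro w
  rw [Submodule.mapQ_apply]
  rfl
end
end

section
/- Let (C, d, U, D₁, D₂) be a Floer datum over a field Λ, with Ĉ, Č, C̄ and the maps i, j, p as defined in the context. Then: (1) ď ∘ i = 0, so i is a chain map from (C̄, 0) to (Č, ď); (2) j ∘ ď = d̂ ∘ j, so j is a chain map; (3) p ∘ d̂ = 0, so p is a chain map from (Ĉ, d̂) to (C̄, 0); (4) i commutes with the x-actions: i(x·z) = X̌(i(z)) for all z ∈ C̄, and p does as well: p(X̂(w)) = x·p(w) for all w ∈ Ĉ; (5) j commutes with the x-actions up to the chain homotopy h : Č → Ĉ given by h(α, Σ_{i=−∞}^{−1} a_i x^i) := (0, −a_{−1}), i.e., j ∘ X̌ − X̂ ∘ j = d̂ ∘ h + h ∘ ď. -/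
noncomputable section

variable (Λ : Type*) (V : Type*) [Field Λ] [AddCommGroup V] [Module Λ V]

variable {Λ V}
variable {W : Type*} [AddCommGroup W] [Module Λ W]
variable {M : Type*} [AddCommGroup M] [Module Λ M]

/-- Package a family of `Λ`-linear coefficient functionals into a linear map to power series.
We use `PowerSeries Λ` (in the variable `x⁻¹`) as a model for `x⁻¹Λ[[x⁻¹]]`: a power series `q`
represents the series `Σ_{n≥0} (coeff n q) x^{-(n+1)}`. -/
def toPS (c : ℕ → (M →ₗ[Λ] Λ)) : M →ₗ[Λ] PowerSeries Λ where
  toFun m := PowerSeries.mk fun n => c n m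
  map_add' x y := by
    ext n
    simp [PowerSeries.coeff_mk]
  map_smul' a x := by
    ext n
    simp [PowerSeries.coeff_mk]

/-- The differential `ď` on `Č = C ⊕ x⁻¹Λ[[x⁻¹]]`. -/
def checkd (F : FloerDatum Λ V) : (V × PowerSeries Λ) →ₗ[Λ] (V × PowerSeries Λ) :=
  (F.d ∘ₗ LinearMap.fst Λ V (PowerSeries Λ)).prod
    ((toPS fun n => F.D₁ ∘ₗ (F.U ^ n)) ∘ₗ LinearMap.fst Λ V (PowerSeries Λ))

/-- The map `X̌` on `Č`. -/
def checkX (F : FloerDatum Λ V) : (V × PowerSeries Λ) →ₗ[Λ] (V × PowerSeries Λ) :=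
  (F.U ∘ₗ LinearMap.fst Λ V (PowerSeries Λ)
      + F.D₂ ∘ₗ (PowerSeries.coeff (R := Λ) 0) ∘ₗ LinearMap.snd Λ V (PowerSeries Λ)).prod
    ((toPS fun n => PowerSeries.coeff (R := Λ) (n + 1)) ∘ₗ LinearMap.snd Λ V (PowerSeries Λ))

/-!
We model `C̄ = Λ((x⁻¹))` by `LaurentSeries Λ = HahnSeries ℤ Λ` in the variable `t = x⁻¹`;
a Laurent series `z` represents `Σ_i aᵢ xⁱ` with `aᵢ = z.coeff (-i)`, and `x` acts by
multiplication by `xbar = single (-1) 1`.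
-/

/-- The element `x` of `C̄ = Λ((x⁻¹))`. -/
def xbar : LaurentSeries Λ := HahnSeries.single (-1 : ℤ) (1 : Λ)

lemma headSupport_finite (f : ℕ → (Λ →ₗ[Λ] W)) (z : LaurentSeries Λ) :
    (Function.support fun n : ℕ => f n (z.coeff (-(n : ℤ)))).Finite := by
  have h1 : (z.support ∩ Set.Iic (0 : ℤ)).Finite := by
    rcases Set.eq_empty_or_nonempty (z.support ∩ Set.Iic (0 : ℤ)) with h | h
    · simp [h]
    · have hwf : (z.support ∩ Set.Iic (0 : ℤ)).IsWF :=
        z.isWF_support.mono Set.inter_subset_left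
      exact Set.Finite.subset (Set.finite_Icc (hwf.min h) 0)
        (fun y hy => Set.mem_Icc.mpr ⟨hwf.min_le h hy, hy.2⟩)
  have hinj : Function.Injective fun n : ℕ => -(n : ℤ) := fun a b hab => by
    simpa using hab
  refine Set.Finite.subset (Set.Finite.preimage (hinj.injOn) h1) ?_
  intro n hn
  have hz : z.coeff (-(n : ℤ)) ≠ 0 := by
    intro h0
    apply hn
    simp [h0]
  exact Set.mem_preimage.mpr ⟨hz, by simp⟩

/-- `z = Σ aᵢ xⁱ ↦ Σ_{i ≥ 0} f i aᵢ`, as a linear map on Laurent series (the sum is finite). -/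
def headMap (f : ℕ → (Λ →ₗ[Λ] W)) : LaurentSeries Λ →ₗ[Λ] W where
  toFun z := ∑ᶠ n : ℕ, f n (z.coeff (-(n : ℤ)))
  map_add' z w := by
    show (∑ᶠ n : ℕ, f n ((z + w).coeff (-(n : ℤ))))
        = (∑ᶠ n : ℕ, f n (z.coeff (-(n : ℤ)))) + ∑ᶠ n : ℕ, f n (w.coeff (-(n : ℤ)))
    rw [← finsum_add_distrib (headSupport_finite f z) (headSupport_finite f w)]
    exact finsum_congr fun n => by rw [HahnSeries.coeff_add, map_add]
  map_smul' a z := by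
    show (∑ᶠ n : ℕ, f n ((a • z).coeff (-(n : ℤ)))) = a • ∑ᶠ n : ℕ, f n (z.coeff (-(n : ℤ)))
    rw [smul_finsum]
    exact finsum_congr fun n => by rw [HahnSeries.coeff_smul, map_smul]

/-- The coefficient of `xⁱ` (i.e. of `t^{-i}`), as a linear functional on Laurent series. -/
def lcoeff (k : ℤ) : LaurentSeries Λ →ₗ[Λ] Λ where
  toFun z := z.coeff k
  map_add' _ _ := HahnSeries.coeff_add
  map_smul' _ _ := HahnSeries.coeff_smul

/-- A power series `q`, viewed as `Σ_{n≥0} (coeff n q) x^{-(n+1)}`, embedded into `Λ((x⁻¹))`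
(multiplying the usual embedding by `t = x⁻¹`). -/
def psToLaurentShift : PowerSeries Λ →ₗ[Λ] LaurentSeries Λ where
  toFun q := HahnSeries.single (1 : ℤ) (1 : Λ) * (HahnSeries.ofPowerSeries ℤ Λ q)
  map_add' q r := by
    show HahnSeries.single (1 : ℤ) (1 : Λ) * (HahnSeries.ofPowerSeries ℤ Λ (q + r))
        = HahnSeries.single (1 : ℤ) (1 : Λ) * (HahnSeries.ofPowerSeries ℤ Λ q)
          + HahnSeries.single (1 : ℤ) (1 : Λ) * (HahnSeries.ofPowerSeries ℤ Λ r)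
    rw [map_add, mul_add]
  map_smul' a q := by
    show HahnSeries.single (1 : ℤ) (1 : Λ) * (HahnSeries.ofPowerSeries ℤ Λ (a • q))
        = a • (HahnSeries.single (1 : ℤ) (1 : Λ) * HahnSeries.ofPowerSeries ℤ Λ q)
    rw [PowerSeries.smul_eq_C_mul, map_mul, HahnSeries.ofPowerSeries_C, HahnSeries.C_apply,
      mul_left_comm, HahnSeries.single_zero_mul_eq_smul]

/-- A polynomial `Σ aᵢ xⁱ`, viewed inside `Λ((x⁻¹))` by substituting `x = t⁻¹`. -/
def polyToLaurent : Polynomial Λ →ₗ[Λ] LaurentSeries Λ :=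
  polySum fun n => LinearMap.smulRight (LinearMap.id : Λ →ₗ[Λ] Λ) ((xbar : LaurentSeries Λ) ^ n)

/-- The map `i : C̄ → Č`. -/
def imap (F : FloerDatum Λ V) : LaurentSeries Λ →ₗ[Λ] (V × PowerSeries Λ) :=
  (headMap fun n => (F.U ^ n) ∘ₗ F.D₂).prod
    (toPS fun n => lcoeff ((n : ℤ) + 1))

/-- The map `j : Č → Ĉ`, `(α, q) ↦ (α, 0)`. -/
def jmap : (V × PowerSeries Λ) →ₗ[Λ] (V × Polynomial Λ) :=
  (LinearMap.fst Λ V (PowerSeries Λ)).prod 0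

/-- The map `p : Ĉ → C̄`,
`(α, Σ_{i≥0} aᵢ xⁱ) ↦ Σ_{i≤-1} D₁(U^{-i-1} α) xⁱ + Σ_{i≥0} aᵢ xⁱ`. -/
def pmap (F : FloerDatum Λ V) : (V × Polynomial Λ) →ₗ[Λ] LaurentSeries Λ :=
  (psToLaurentShift ∘ₗ (toPS fun n => F.D₁ ∘ₗ (F.U ^ n))) ∘ₗ LinearMap.fst Λ V (Polynomial Λ)
    + polyToLaurent ∘ₗ LinearMap.snd Λ V (Polynomial Λ)

/-- The chain homotopy `h : Č → Ĉ`, `h(α, Σ_{i≤-1} aᵢ xⁱ) = (0, -a₋₁)`. -/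
def hmap : (V × PowerSeries Λ) →ₗ[Λ] (V × Polynomial Λ) :=
  (0 : (V × PowerSeries Λ) →ₗ[Λ] V).prod
    (-((Algebra.linearMap Λ (Polynomial Λ)) ∘ₗ (PowerSeries.coeff (R := Λ) 0)
        ∘ₗ LinearMap.snd Λ V (PowerSeries Λ)))

/-!
Everything rests on two consequences of the Floer relations. Since `U^k D₂` lands in degree
`4 - 4k`, which is even and so never `1` in `ℤ/8`, we have `D₁ U^k D₂ = 0`; feeding this into
`dU = Ud + D₂D₁` gives, by induction on `k`, `d U^k D₂ = 0` and `D₁ U^k d = 0`. These kill every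
term of `ď ∘ i` and `p ∘ d̂`. The remaining identities are coefficient bookkeeping: multiplying a
series in `x⁻¹` by `x` moves its `x⁻¹`-coefficient into the constant term, which is exactly what
`X̌` feeds into `D₂`, what `X̂` produces as `D₁ α`, and what the homotopy `h` compensates.
-/

section Series

lemma finsum_nat_eq_add_finsum_succ {N : Type*} [AddCommMonoid N] (f : ℕ → N)
    (hf : (Function.support f).Finite) : ∑ᶠ n, f n = f 0 + ∑ᶠ n, f (n + 1) := by
  have hr : Set.range (· + 1) = ({0}ᶜ : Set ℕ) := by
    ext n; cases n <;> simp
  rw [← finsum_mem_univ f, ← Set.union_compl_self {0},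
    finsum_mem_union' disjoint_compl_right ((Set.finite_singleton 0).inter_of_left _)
      (hf.inter_of_right _), finsum_mem_singleton, ← hr, finsum_mem_range (add_left_injective 1)]

lemma toPS_apply (c : ℕ → (M →ₗ[Λ] Λ)) (m : M) : toPS c m = PowerSeries.mk fun n => c n m := rfl

lemma polySum_apply (f : ℕ → (Λ →ₗ[Λ] W)) (P : Polynomial Λ) :
    polySum f P = P.sum fun i a => f i a := rfl

lemma polySum_C (f : ℕ → (Λ →ₗ[Λ] W)) (a : Λ) : polySum f (Polynomial.C a) = f 0 a :=
  Polynomial.sum_C_index (map_zero _)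

lemma comp_polySum {W' : Type*} [AddCommGroup W'] [Module Λ W'] (g : W →ₗ[Λ] W')
    (f : ℕ → (Λ →ₗ[Λ] W)) : g ∘ₗ polySum f = polySum fun n => g ∘ₗ f n := by
  ext P
  simp only [LinearMap.comp_apply, polySum_apply, Polynomial.sum, map_sum]

lemma polySum_eq_zero {f : ℕ → (Λ →ₗ[Λ] W)} (hf : ∀ n a, f n a = 0) : polySum f = 0 := by
  ext P
  simp [polySum_apply, Polynomial.sum, hf]

lemma headMap_apply (f : ℕ → (Λ →ₗ[Λ] W)) (z : LaurentSeries Λ) :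
    headMap f z = ∑ᶠ n : ℕ, f n (z.coeff (-(n : ℤ))) := rfl

lemma comp_headMap {W' : Type*} [AddCommGroup W'] [Module Λ W'] (g : W →ₗ[Λ] W')
    (f : ℕ → (Λ →ₗ[Λ] W)) : g ∘ₗ headMap f = headMap fun n => g ∘ₗ f n := by
  ext z
  exact map_finsum g (headSupport_finite f z)

lemma headMap_eq_zero {f : ℕ → (Λ →ₗ[Λ] W)} (hf : ∀ n a, f n a = 0) : headMap f = 0 := by
  ext z
  simp [headMap_apply, hf]

lemma coeff_xbar_mul (z : LaurentSeries Λ) (k : ℤ) : (xbar * z).coeff k = z.coeff (k + 1) := by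
  rw [xbar, show k = k + 1 + -1 by ring, HahnSeries.coeff_single_mul_add, one_mul,
    add_neg_cancel_right]

lemma headMap_xbar_mul (f : ℕ → (Λ →ₗ[Λ] W)) (z : LaurentSeries Λ) :
    headMap f (xbar * z) = f 0 (z.coeff 1) + headMap (fun n => f (n + 1)) z := by
  have hfin := headSupport_finite f (xbar * z)
  simp only [headMap_apply, coeff_xbar_mul] at hfin ⊢
  rw [finsum_nat_eq_add_finsum_succ _ hfin]
  push_cast
  simp only [neg_add, neg_add_cancel_right]

lemma polyToLaurent_eq_aeval (P : Polynomial Λ) : polyToLaurent P = Polynomial.aeval xbar P := by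
  induction P using Polynomial.induction_on' with
  | add p q hp hq => rw [map_add, map_add, hp, hq]
  | monomial n a =>
    rw [Polynomial.aeval_monomial, polyToLaurent, polySum_apply,
      Polynomial.sum_monomial_index _ _ (by simp), LinearMap.smulRight_apply,
      LinearMap.id_apply, LaurentSeries.algebraMap_apply, HahnSeries.C_apply,
      HahnSeries.single_zero_mul_eq_smul]

lemma xbar_mul_psToLaurentShift (q : PowerSeries Λ) :
    xbar * psToLaurentShift q = algebraMap Λ (LaurentSeries Λ) (PowerSeries.coeff 0 q)
      + psToLaurentShift (PowerSeries.mk fun n => PowerSeries.coeff (n + 1) q) := by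
  have hx : (xbar : LaurentSeries Λ) * HahnSeries.single 1 1 = 1 := by
    rw [xbar, HahnSeries.single_mul_single, neg_add_cancel, one_mul, HahnSeries.single_zero_one]
  rw [psToLaurentShift, LinearMap.coe_mk, AddHom.coe_mk, ← mul_assoc, hx, one_mul]
  conv_lhs => rw [PowerSeries.eq_X_mul_shift_add_const q]
  rw [map_add, map_mul, HahnSeries.ofPowerSeries_X, HahnSeries.ofPowerSeries_C, add_comm,
    LaurentSeries.algebraMap_apply, PowerSeries.coeff_zero_eq_constantCoeff_apply]

end Series

section Maps

variable (F : FloerDatum Λ V) (α : V) (P : Polynomial Λ) (q : PowerSeries Λ) (z : LaurentSeries Λ)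

@[simp] lemma hatd_apply :
    hatd F (α, P) = (F.d α - polySum (fun i => (F.U ^ i) ∘ₗ F.D₂) P, 0) := rfl

@[simp] lemma hatX_apply : hatX F (α, P) = (F.U α, Polynomial.C (F.D₁ α) + Polynomial.X * P) :=
  rfl

@[simp] lemma checkd_apply : checkd F (α, q) = (F.d α, toPS (fun n => F.D₁ ∘ₗ F.U ^ n) α) := rfl

@[simp] lemma checkX_apply :
    checkX F (α, q) = (F.U α + F.D₂ (PowerSeries.coeff 0 q),
      PowerSeries.mk fun n => PowerSeries.coeff (n + 1) q) := rfl

@[simp] lemma imap_apply :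
    imap F z = (headMap (fun n => (F.U ^ n) ∘ₗ F.D₂) z, PowerSeries.mk fun n => z.coeff (n + 1)) :=
  rfl

@[simp] lemma jmap_apply : (jmap (α, q) : V × Polynomial Λ) = (α, 0) := rfl

@[simp] lemma pmap_apply :
    pmap F (α, P) = psToLaurentShift (toPS (fun n => F.D₁ ∘ₗ F.U ^ n) α) + polyToLaurent P := rfl

@[simp] lemma hmap_apply :
    (hmap (α, q) : V × Polynomial Λ) = (0, -Polynomial.C (PowerSeries.coeff 0 q)) := rfl

end Maps

namespace FloerDatum

variable (F : FloerDatum Λ V)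

lemma d_U_apply (v : V) : F.d (F.U v) = F.U (F.d v) + F.D₂ (F.D₁ v) := by
  have h := LinearMap.congr_fun F.U_rel v
  simp only [LinearMap.add_apply, LinearMap.sub_apply, LinearMap.comp_apply,
    LinearMap.zero_apply] at h
  rw [← sub_eq_zero, ← neg_eq_zero, ← h]
  abel

lemma pow_U_D₂_mem (k : ℕ) (a : Λ) : (F.U ^ k) (F.D₂ a) ∈ F.gr (4 - 4 * (k : ZMod 8)) := by
  induction k with
  | zero => simpa using F.D₂_mem a
  | succ n ih =>
    rw [pow_succ', Module.End.mul_apply, show 4 - 4 * ((n + 1 : ℕ) : ZMod 8)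
      = 4 - 4 * (n : ZMod 8) - 4 by push_cast; ring]
    exact F.U_mem _ _ ih

lemma D₁_pow_U_D₂ (k : ℕ) (a : Λ) : F.D₁ ((F.U ^ k) (F.D₂ a)) = 0 :=
  F.D₁_vanish _ (by generalize (k : ZMod 8) = c; revert c; decide) _ (F.pow_U_D₂_mem k a)

lemma d_pow_U_D₂ (k : ℕ) (a : Λ) : F.d ((F.U ^ k) (F.D₂ a)) = 0 := by
  induction k with
  | zero => simpa using LinearMap.congr_fun F.d_D₂ a
  | succ n ih =>
    rw [pow_succ', Module.End.mul_apply, d_U_apply, ih, D₁_pow_U_D₂, map_zero, map_zero, add_zero]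

lemma D₁_pow_U_d (k : ℕ) (v : V) : F.D₁ ((F.U ^ k) (F.d v)) = 0 := by
  induction k generalizing v with
  | zero => simpa using LinearMap.congr_fun F.D₁_d v
  | succ n ih =>
    rw [pow_succ, Module.End.mul_apply, eq_sub_of_add_eq (F.d_U_apply v).symm, map_sub, map_sub,
      ih, D₁_pow_U_D₂, sub_zero]

lemma toPS_D₁_pow_U_d (v : V) : toPS (fun n => F.D₁ ∘ₗ F.U ^ n) (F.d v) = 0 :=
  PowerSeries.ext fun n => by simpa [toPS_apply] using F.D₁_pow_U_d n v

lemma toPS_D₁_pow_U_pow_U_D₂ (k : ℕ) (a : Λ) :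
    toPS (fun n => F.D₁ ∘ₗ F.U ^ n) ((F.U ^ k) (F.D₂ a)) = 0 :=
  PowerSeries.ext fun n => by
    simpa [toPS_apply, ← Module.End.mul_apply, ← pow_add] using F.D₁_pow_U_D₂ (n + k) a

lemma checkd_comp_imap : checkd F ∘ₗ imap F = 0 := by
  refine LinearMap.ext fun z => Prod.ext ?_ ?_
  · change (F.d ∘ₗ headMap _) z = 0
    rw [comp_headMap, headMap_eq_zero fun n a => F.d_pow_U_D₂ n a, LinearMap.zero_apply]
  · change (toPS _ ∘ₗ headMap _) z = 0
    rw [comp_headMap, headMap_eq_zero fun n a => F.toPS_D₁_pow_U_pow_U_D₂ n a,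
      LinearMap.zero_apply]

lemma jmap_comp_checkd : jmap ∘ₗ checkd F = hatd F ∘ₗ jmap := by
  refine LinearMap.ext fun ⟨α, q⟩ => ?_
  simp

lemma pmap_comp_hatd : pmap F ∘ₗ hatd F = 0 := by
  refine LinearMap.ext fun ⟨α, P⟩ => ?_
  have hP : toPS (fun n => F.D₁ ∘ₗ F.U ^ n) (polySum (fun i => (F.U ^ i) ∘ₗ F.D₂) P) = 0 := by
    rw [← LinearMap.comp_apply, comp_polySum,
      polySum_eq_zero fun n a => F.toPS_D₁_pow_U_pow_U_D₂ n a, LinearMap.zero_apply]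
  simp [F.toPS_D₁_pow_U_d, hP]

lemma imap_xbar_mul (z : LaurentSeries Λ) : imap F (xbar * z) = checkX F (imap F z) := by
  have hU : headMap (fun n => (F.U ^ (n + 1)) ∘ₗ F.D₂) z
      = F.U (headMap (fun n => (F.U ^ n) ∘ₗ F.D₂) z) := by
    rw [← LinearMap.comp_apply, comp_headMap]
    simp only [pow_succ', Module.End.mul_eq_comp, LinearMap.comp_assoc]
  simp [headMap_xbar_mul, coeff_xbar_mul, hU, add_comm]

lemma pmap_hatX (w : V × Polynomial Λ) : pmap F (hatX F w) = xbar * pmap F w := by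
  obtain ⟨α, P⟩ := w
  have hU : toPS (fun n => F.D₁ ∘ₗ F.U ^ n) (F.U α)
      = PowerSeries.mk fun n => PowerSeries.coeff (n + 1) (toPS (fun n => F.D₁ ∘ₗ F.U ^ n) α) :=
    PowerSeries.ext fun n => by simp [toPS_apply, pow_succ]
  simp [mul_add, xbar_mul_psToLaurentShift, hU, polyToLaurent_eq_aeval, toPS_apply]
  abel

lemma jmap_comp_checkX_sub_hatX_comp_jmap :
    jmap ∘ₗ checkX F - hatX F ∘ₗ jmap = hatd F ∘ₗ hmap + hmap ∘ₗ checkd F := by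
  refine LinearMap.ext fun ⟨α, q⟩ => ?_
  simp [polySum_C, toPS_apply]

end FloerDatum

/-- (1) `ď ∘ i = 0`; (2) `j ∘ ď = d̂ ∘ j`; (3) `p ∘ d̂ = 0`; (4) `i` and `p` commute with the
`x`-actions; (5) `j` commutes with the `x`-actions up to the chain homotopy `h`. -/
theorem stmt_3 (F : FloerDatum Λ V) :
    checkd F ∘ₗ imap F = 0 ∧
    jmap ∘ₗ checkd F = hatd F ∘ₗ jmap ∧
    pmap F ∘ₗ hatd F = 0 ∧
    (∀ z : LaurentSeries Λ, imap F (xbar * z) = checkX F (imap F z)) ∧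
    (∀ w : V × Polynomial Λ, pmap F (hatX F w) = xbar * pmap F w) ∧
    jmap ∘ₗ checkX F - hatX F ∘ₗ jmap = hatd F ∘ₗ hmap + hmap ∘ₗ checkd F :=
  ⟨F.checkd_comp_imap, F.jmap_comp_checkd, F.pmap_comp_hatd, F.imap_xbar_mul, F.pmap_hatX,
    F.jmap_comp_checkX_sub_hatX_comp_jmap⟩
end
end

section
/- The set Λ := { f ∈ HahnSeries ℝ ℚ : for every C ∈ ℝ, the set supp(f) ∩ (−∞, C] is finite } — i.e., the set of formal sums Σ_i a_i λ^{r_i} with rational coefficients a_i and real exponents r_i tending to +∞ — is a subfield of the Hahn series field HahnSeries ℝ ℚ: it contains 0 and 1, and it is closed under addition, negation, multiplication, and inversion of nonzero elements. -/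
/-!
A term of `f * g` at exponent `≤ C` pairs a term of `f` at exponent `≤ C - ord g` with one of `g`
at exponent `≤ C - ord f`, which gives closure under products. For inversion, Mathlib defines
`f⁻¹ = c λ^(-ord f) · ∑ₙ uⁿ` with `ord u > 0`; since `uⁿ` is supported in `[n • ord u, ∞)`, the
Archimedean property leaves only finitely many powers meeting `(-∞, C]`.
-/

theorem finite_setOf_nsmul_le {Γ : Type*} [AddCommMonoid Γ] [LinearOrder Γ]
    [IsOrderedCancelAddMonoid Γ] [Archimedean Γ] {g : Γ} (hg : 0 < g) (C : Γ) :
    {n : ℕ | n • g ≤ C}.Finite := by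
  obtain ⟨N, hN⟩ := Archimedean.arch C hg
  exact (Set.finite_Iic N).subset fun n hn =>
    (nsmul_le_nsmul_iff_left hg).mp (le_trans hn hN)

namespace HahnSeries

def SupportFiniteBelow {Γ R : Type*} [PartialOrder Γ] [Zero R] (f : HahnSeries Γ R) : Prop :=
  ∀ C : Γ, (f.support ∩ Set.Iic C).Finite

namespace SupportFiniteBelow

section Additive

variable {Γ R : Type*} [PartialOrder Γ]

theorem zero [Zero R] : SupportFiniteBelow (0 : HahnSeries Γ R) := fun _ => by
  simp

theorem single [Zero R] (a : Γ) (r : R) : SupportFiniteBelow (single a r) := fun _ =>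
  (Set.finite_singleton a).subset (Set.inter_subset_left.trans support_single_subset)

theorem one [Zero Γ] [Zero R] [One R] : SupportFiniteBelow (1 : HahnSeries Γ R) :=
  single 0 1

theorem add [AddMonoid R] {f g : HahnSeries Γ R} (hf : SupportFiniteBelow f)
    (hg : SupportFiniteBelow g) : SupportFiniteBelow (f + g) := fun C =>
  ((hf C).union (hg C)).subset <| by
    rw [← Set.union_inter_distrib_right]
    exact Set.inter_subset_inter_left _ (support_add_subset f g)

theorem neg [AddGroup R] {f : HahnSeries Γ R} (hf : SupportFiniteBelow f) :
    SupportFiniteBelow (-f) := by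
  simpa only [SupportFiniteBelow, support_neg] using hf

end Additive

variable {Γ R : Type*} [AddCommGroup Γ] [LinearOrder Γ] [IsOrderedAddMonoid Γ]

theorem mul [NonUnitalNonAssocSemiring R] {f g : HahnSeries Γ R} (hf : SupportFiniteBelow f)
    (hg : SupportFiniteBelow g) : SupportFiniteBelow (f * g) := by
  intro C
  refine ((hf (C - g.order)).add (hg (C - f.order))).subset ?_
  rintro _ ⟨ha, hC⟩
  obtain ⟨i, hi, j, hj, rfl⟩ := support_mul_subset ha
  have hfi : f.order ≤ i := order_le_of_coeff_ne_zero hi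
  have hgj : g.order ≤ j := order_le_of_coeff_ne_zero hj
  rw [Set.mem_Iic] at hC
  exact Set.add_mem_add ⟨hi, le_sub_iff_add_le.mpr (by grw [hgj]; exact hC)⟩
    ⟨hj, le_sub_iff_add_le'.mpr (by grw [hfi]; exact hC)⟩

theorem pow [Semiring R] {f : HahnSeries Γ R} (hf : SupportFiniteBelow f) (n : ℕ) :
    SupportFiniteBelow (f ^ n) := by
  induction n with
  | zero => simpa only [pow_zero] using one
  | succ n ih => simpa only [pow_succ] using ih.mul hf

theorem nsmul_order_le_of_mem_support_pow [Semiring R] {u : HahnSeries Γ R} (hu : u ≠ 0)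
    {n : ℕ} {a : Γ} (ha : a ∈ (u ^ n).support) : n • u.order ≤ a := by
  have : n • u.orderTop ≤ (a : WithTop Γ) :=
    orderTop_nsmul_le_orderTop_pow.trans (orderTop_le_of_coeff_ne_zero ha)
  rwa [← order_eq_orderTop_of_ne_zero hu, ← WithTop.coe_nsmul, WithTop.coe_le_coe] at this

theorem hsum_powers [CommRing R] [Archimedean Γ] {u : HahnSeries Γ R}
    (hu : SupportFiniteBelow u) (hpos : 0 < u.orderTop) :
    SupportFiniteBelow (SummableFamily.powers u).hsum := by
  rcases eq_or_ne u 0 with rfl | hu0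
  · have h := SummableFamily.one_sub_self_mul_hsum_powers hpos
    rw [sub_zero, one_mul] at h
    exact h ▸ one
  intro C
  have hord : 0 < u.order := (zero_lt_orderTop_iff hu0).mp hpos
  refine ((finite_setOf_nsmul_le hord C).biUnion fun n _ => hu.pow n C).subset ?_
  rintro a ⟨ha, hC⟩
  obtain ⟨n, hn⟩ := Set.mem_iUnion.mp (SummableFamily.support_hsum_subset ha)
  rw [SummableFamily.powers_of_orderTop_pos hpos] at hn
  exact Set.mem_biUnion ((nsmul_order_le_of_mem_support_pow hu0 hn).trans hC) ⟨hn, hC⟩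

theorem inv [Field R] [Archimedean Γ] {f : HahnSeries Γ R} (hf : SupportFiniteBelow f) :
    SupportFiniteBelow f⁻¹ := by
  rcases eq_or_ne f 0 with rfl | hf0
  · simpa only [inv_zero] using zero
  rw [inv_def]
  refine (single _ _).mul (hsum_powers ?_ (unit_aux f
    (inv_mul_cancel₀ (leadingCoeff_ne_zero.mpr hf0)) _ (neg_add_cancel _)))
  rw [sub_eq_add_neg]
  exact one.add ((single _ _).mul hf).neg

end SupportFiniteBelow

end HahnSeries

open HahnSeries

/-- The set `Λ` of Hahn series over `ℝ` with rational coefficients whose support meets every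
interval `(-∞, C]` in a finite set — i.e. the formal sums `Σᵢ aᵢ λ^{rᵢ}` with `aᵢ ∈ ℚ`,
`rᵢ ∈ ℝ` and `rᵢ → ∞` — is a subfield of `HahnSeries ℝ ℚ`: it contains `0` and `1`, and is
closed under addition, negation, multiplication, and inversion of nonzero elements. -/
theorem stmt_12 :
    (0 : HahnSeries ℝ ℚ) ∈ {f : HahnSeries ℝ ℚ | ∀ C : ℝ, (f.support ∩ Set.Iic C).Finite} ∧
    (1 : HahnSeries ℝ ℚ) ∈ {f : HahnSeries ℝ ℚ | ∀ C : ℝ, (f.support ∩ Set.Iic C).Finite} ∧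
    (∀ f g : HahnSeries ℝ ℚ,
      f ∈ {f : HahnSeries ℝ ℚ | ∀ C : ℝ, (f.support ∩ Set.Iic C).Finite} →
      g ∈ {f : HahnSeries ℝ ℚ | ∀ C : ℝ, (f.support ∩ Set.Iic C).Finite} →
      f + g ∈ {f : HahnSeries ℝ ℚ | ∀ C : ℝ, (f.support ∩ Set.Iic C).Finite}) ∧
    (∀ f : HahnSeries ℝ ℚ,
      f ∈ {f : HahnSeries ℝ ℚ | ∀ C : ℝ, (f.support ∩ Set.Iic C).Finite} →
      -f ∈ {f : HahnSeries ℝ ℚ | ∀ C : ℝ, (f.support ∩ Set.Iic C).Finite}) ∧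
    (∀ f g : HahnSeries ℝ ℚ,
      f ∈ {f : HahnSeries ℝ ℚ | ∀ C : ℝ, (f.support ∩ Set.Iic C).Finite} →
      g ∈ {f : HahnSeries ℝ ℚ | ∀ C : ℝ, (f.support ∩ Set.Iic C).Finite} →
      f * g ∈ {f : HahnSeries ℝ ℚ | ∀ C : ℝ, (f.support ∩ Set.Iic C).Finite}) ∧
    (∀ f : HahnSeries ℝ ℚ,
      f ∈ {f : HahnSeries ℝ ℚ | ∀ C : ℝ, (f.support ∩ Set.Iic C).Finite} →
      f ≠ 0 →
      f⁻¹ ∈ {f : HahnSeries ℝ ℚ | ∀ C : ℝ, (f.support ∩ Set.Iic C).Finite}) :=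
  ⟨SupportFiniteBelow.zero, SupportFiniteBelow.one, fun _ _ => SupportFiniteBelow.add,
    fun _ => SupportFiniteBelow.neg, fun _ _ => SupportFiniteBelow.mul,
    fun _ hf _ => SupportFiniteBelow.inv hf⟩
end

section
/- Let n ≥ 3 and let a₁, …, a_n be pairwise coprime integers with a_i ≥ 2 for each i, and set a := a₁a₂⋯a_n. For each i let β_i be the unique integer with 0 < β_i < a_i and a_i ∣ 1 + β_i·(a/a_i). Then, as real numbers, R(a₁,…,a_n) = 2·(1/a + Σ_{i=1}^{n} β_i/a_i) − 3; that is, 2/a − 3 + n + Σ_{i=1}^{n} (2/a_i)·Σ_{k=1}^{a_i−1} cot(πka/a_i²)·cot(πk/a_i)·sin²(πk/a_i) = 2·(1/a + Σ_{i=1}^{n} β_i/a_i) − 3. -/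
/-!
Put `m = aᵢ` and `e = a / aᵢ`. Since `cot x · sin² x = sin (2x) / 2`, the `i`-th summand of `R` is
`(1/m) Σₖ cot (πke/m) sin (2πk/m)`. As `eβᵢ ≡ -1 (mod m)`, the substitution `k ↦ ek`, a
permutation of `ℤ/m`, turns this sum into `-Σₖ cot (πk/m) sin (2πkβᵢ/m)`, the finite Fourier
expansion of a sawtooth: expanding `cot x · sin (2dx) = 1 + 2 Σ_{0<j<d} cos (2jx) + cos (2dx)` and
summing over `k`, where the sums of nontrivial `m`-th roots of unity vanish, gives `m - 2βᵢ`.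
Hence the `i`-th summand is `2βᵢ/aᵢ - 1`.
-/

open Real

noncomputable section

/-- The `i`-th summand of the Fintushel–Stern invariant:
`(2/m)·Σ_{k=1}^{m-1} cot(πkA/m²)·cot(πk/m)·sin²(πk/m)`, where `A` is the (real) product of
the multiplicities. -/
def fsTerm (A : ℝ) (m : ℕ) : ℝ :=
  (2 / (m : ℝ)) * ∑ k ∈ Finset.Icc 1 (m - 1),
    Real.cot (π * k * A / (m : ℝ) ^ 2) * Real.cot (π * k / (m : ℝ)) *
      Real.sin (π * k / (m : ℝ)) ^ 2

/-- The Fintushel–Stern invariant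
`R(a₁,…,aₙ) = 2/a - 3 + n + Σᵢ (2/aᵢ)·Σ_{k=1}^{aᵢ-1} cot(πka/aᵢ²)·cot(πk/aᵢ)·sin²(πk/aᵢ)`. -/
def FSR (n : ℕ) (a : Fin n → ℕ) : ℝ :=
  2 / (∏ j, (a j : ℝ)) - 3 + n + ∑ i, fsTerm (∏ j, (a j : ℝ)) (a i)


open Finset Function

lemma Real.cot_add_pi (x : ℝ) : cot (x + π) = cot x := by
  rw [cot_eq_cos_div_sin, cot_eq_cos_div_sin, cos_add_pi, sin_add_pi, neg_div_neg_eq]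

lemma Real.cot_mul_sin_sq (x : ℝ) : cot x * sin x ^ 2 = sin (2 * x) / 2 := by
  rcases eq_or_ne (sin x) 0 with h | h
  · simp [h, sin_two_mul]
  · rw [cot_eq_cos_div_sin, sin_two_mul]
    field_simp

lemma sin_mul_sum_range_cos (x : ℝ) (d : ℕ) :
    sin x * (2 * ∑ j ∈ range d, cos (2 * j * x) - 1 + cos (2 * d * x)) =
      cos x * sin (2 * d * x) := by
  induction d with
  | zero => simp
  | succ d ih =>
    rw [sum_range_succ, Nat.cast_succ, show 2 * ((d : ℝ) + 1) * x = 2 * d * x + 2 * x by ring,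
      cos_add, sin_add, cos_two_mul, sin_two_mul]
    linear_combination ih - (2 * cos x * sin (2 * d * x)) * sin_sq_add_cos_sq x

lemma sum_range_cos_eq_zero {m j : ℕ} (hj : ¬ m ∣ j) :
    ∑ k ∈ range m, cos (2 * π * j * k / m) = 0 := by
  rcases eq_or_ne m 0 with rfl | hm
  · simp
  have hζ := Complex.isPrimitiveRoot_exp m hm
  set z := Complex.exp (2 * π * Complex.I / m) ^ j
  have hz : z ≠ 1 := fun h => hj ((hζ.pow_eq_one_iff_dvd j).1 h)
  have hzm : z ^ m = 1 := by rw [pow_right_comm, hζ.pow_eq_one, one_pow]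
  have hre (k : ℕ) : (z ^ k).re = cos (2 * π * j * k / m) := by
    rw [← pow_mul, ← Complex.exp_nat_mul, ← Complex.exp_ofReal_mul_I_re]
    push_cast
    ring_nf
  calc ∑ k ∈ range m, cos (2 * π * j * k / m) = (∑ k ∈ range m, z ^ k).re := by
        simp only [Complex.re_sum, hre]
    _ = 0 := by rw [geom_sum_eq hz, hzm, sub_self, zero_div, Complex.zero_re]

theorem Function.Periodic.sum_range_comp_mul {M : Type*} [AddCommMonoid M] {f : ℕ → M} {m u : ℕ}
    (hf : Periodic f m) (hu : u.Coprime m) :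
    ∑ k ∈ range m, f (u * k) = ∑ k ∈ range m, f k := by
  rcases m with _ | m
  · simp
  have hval (g : ℕ → M) : ∑ k ∈ range (m + 1), g k = ∑ x : ZMod (m + 1), g x.val :=
    (Fin.sum_univ_eq_sum_range g _).symm
  rw [hval, hval]
  calc ∑ x : ZMod (m + 1), f (u * x.val)
      = ∑ x : ZMod (m + 1), f (ZMod.unitOfCoprime u hu * x).val := by
        refine Fintype.sum_congr _ _ fun x => ?_
        rw [ZMod.coe_unitOfCoprime, ZMod.val_mul, ZMod.val_natCast, Nat.mod_mul_mod, hf.map_mod_nat]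
    _ = ∑ x : ZMod (m + 1), f x.val :=
        Equiv.sum_comp (Units.mulLeft (ZMod.unitOfCoprime u hu)) fun x => f x.val

lemma sum_range_cot_mul_sin {m d : ℕ} (hd0 : 0 < d) (hdm : d < m) :
    ∑ k ∈ range m, cot (π * k / m) * sin (2 * π * k * d / m) = m - 2 * d := by
  set R : ℕ → ℝ := fun k =>
    2 * ∑ j ∈ range d, cos (2 * π * j * k / m) - 1 + cos (2 * π * d * k / m)
  have hm : (0 : ℝ) < m := by exact_mod_cast hd0.trans hdm
  have hR : ∀ k ∈ Ico 1 m, cot (π * k / m) * sin (2 * π * k * d / m) = R k := by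
    intro k hk
    obtain ⟨hk1, hkm⟩ := mem_Ico.1 hk
    have hsin : sin (π * k / m) ≠ 0 := by
      refine (sin_pos_of_pos_of_lt_pi (by positivity) ?_).ne'
      rw [div_lt_iff₀ hm, mul_lt_mul_iff_right₀ pi_pos]
      exact_mod_cast hkm
    have hcos : ∑ j ∈ range d, cos (2 * π * j * k / m) = ∑ j ∈ range d, cos (2 * j * (π * k / m)) :=
      sum_congr rfl fun j _ => by ring_nf
    rw [cot_eq_cos_div_sin, div_mul_eq_mul_div, div_eq_iff hsin]
    simp only [R]
    rw [hcos, show 2 * π * (k : ℝ) * d / m = 2 * d * (π * k / m) by ring,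
      show 2 * π * (d : ℝ) * k / m = 2 * d * (π * k / m) by ring, ← sin_mul_sum_range_cos]
    ring
  have hsumR : ∑ k ∈ range m, R k = m := by
    obtain ⟨d, rfl⟩ : ∃ d', d = d' + 1 := ⟨d - 1, by omega⟩
    have hj : ∀ j ∈ range d, ∑ k ∈ range m, cos (2 * π * ↑(j + 1) * k / m) = 0 :=
      fun j hj => sum_range_cos_eq_zero
        (Nat.not_dvd_of_pos_of_lt j.succ_pos (by rw [mem_range] at hj; omega))
    simp only [R, sum_add_distrib, sum_sub_distrib, ← mul_sum]
    rw [sum_comm, sum_range_succ', sum_eq_zero hj,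
      sum_range_cos_eq_zero (Nat.not_dvd_of_pos_of_lt hd0 hdm)]
    simp only [CharP.cast_eq_zero, mul_zero, zero_mul, zero_div, cos_zero, sum_const, card_range,
      nsmul_eq_mul, mul_one, zero_add, add_zero]
    ring
  have hR0 : R 0 = 2 * d := by
    simp only [R, CharP.cast_eq_zero, mul_zero, zero_div, cos_zero, sum_const, card_range,
      nsmul_eq_mul, mul_one]
    ring
  -- the identity `hR` fails at `k = 0`, where the left side vanishes but `R 0 = 2 * d`
  calc ∑ k ∈ range m, cot (π * k / m) * sin (2 * π * k * d / m)
      = ∑ k ∈ Ico 1 m, cot (π * k / m) * sin (2 * π * k * d / m) := by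
        rw [sum_range_eq_add_Ico _ (hd0.trans hdm)]
        simp
    _ = ∑ k ∈ range m, R k - R 0 := by
        rw [sum_congr rfl hR, sum_range_eq_add_Ico _ (hd0.trans hdm)]
        ring
    _ = m - 2 * d := by rw [hsumR, hR0]

lemma sum_range_cot_mul_mul_sin {m e b : ℕ} (hb0 : 0 < b) (hbm : b < m) (hdvd : m ∣ 1 + b * e) :
    ∑ k ∈ range m, cot (π * k * e / m) * sin (2 * π * k / m) = 2 * b - m := by
  obtain ⟨s, hs⟩ := hdvd
  have hm : (m : ℝ) ≠ 0 := Nat.cast_ne_zero.2 (by omega)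
  have hsZ : (1 + b * e : ℤ) = m * s := by exact_mod_cast hs
  have hcop : e.Coprime m := Nat.isCoprime_iff_coprime.1 ⟨-b, s, by linear_combination -hsZ⟩
  set F : ℕ → ℝ := fun k => cot (π * k / m) * sin (2 * π * k * b / m)
  have hF : Periodic F m := fun k => by
    simp only [F]
    rw [Nat.cast_add, show π * (k + m : ℝ) / m = π * k / m + π by field_simp,
      show 2 * π * (k + m : ℝ) * b / m = 2 * π * k * b / m + (b : ℤ) * (2 * π) by
        push_cast; field_simp,
      cot_add_pi, sin_add_int_mul_two_pi]
  have hsR : (1 + b * e : ℝ) = m * s := by exact_mod_cast hs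
  have hterm (k : ℕ) : cot (π * k * e / m) * sin (2 * π * k / m) = -F (e * k) := by
    simp only [F]
    rw [show 2 * π * ((e * k : ℕ) : ℝ) * b / m = -(2 * π * k / m) + (k * s : ℤ) * (2 * π) by
        push_cast; field_simp; linear_combination (k : ℝ) * hsR,
      sin_add_int_mul_two_pi, sin_neg]
    push_cast
    ring_nf
  rw [sum_congr rfl fun k _ => hterm k, sum_neg_distrib, hF.sum_range_comp_mul hcop,
    sum_range_cot_mul_sin hb0 hbm]
  ring

lemma fsTerm_mul_eq {m e b : ℕ} (hb0 : 0 < b) (hbm : b < m) (hdvd : m ∣ 1 + b * e) :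
    fsTerm (m * e) m = 2 * b / m - 1 := by
  have hm : (m : ℝ) ≠ 0 := Nat.cast_ne_zero.2 (by omega)
  have hterm (k : ℕ) : cot (π * k * (m * e) / m ^ 2) * cot (π * k / m) * sin (π * k / m) ^ 2
      = cot (π * k * e / m) * sin (2 * π * k / m) / 2 := by
    rw [mul_assoc, cot_mul_sin_sq, show π * k * (m * e) / (m : ℝ) ^ 2 = π * k * e / m by
      field_simp, show 2 * (π * k / m) = 2 * π * k / m by ring]
    ring
  have hIcc : Icc 1 (m - 1) = Ico 1 m := by ext; simp only [mem_Icc, mem_Ico]; omega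
  have hrange : ∑ k ∈ Ico 1 m, cot (π * k * e / m) * sin (2 * π * k / m)
      = ∑ k ∈ range m, cot (π * k * e / m) * sin (2 * π * k / m) := by
    rw [sum_range_eq_add_Ico _ (by omega)]
    simp
  rw [fsTerm, sum_congr rfl fun k _ => hterm k, ← sum_div, hIcc, hrange,
    sum_range_cot_mul_mul_sin hb0 hbm hdvd]
  field_simp

theorem stmt_14_general (n : ℕ) (a : Fin n → ℕ)
    (β : Fin n → ℕ)
    (hβpos : ∀ i, 0 < β i) (hβlt : ∀ i, β i < a i)
    (hβ : ∀ i, a i ∣ 1 + β i * ((∏ j, a j) / a i)) :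
    FSR n a = 2 * (1 / (∏ j, (a j : ℝ)) + ∑ i, (β i : ℝ) / (a i : ℝ)) - 3 := by
  have hterm (i : Fin n) : fsTerm (∏ j, (a j : ℝ)) (a i) = 2 * (β i / a i) - 1 := by
    rw [← Nat.cast_prod, ← Nat.mul_div_cancel' (dvd_prod_of_mem a (mem_univ i)), Nat.cast_mul,
      fsTerm_mul_eq (hβpos i) (hβlt i) (hβ i), mul_div_assoc]
  simp only [FSR, hterm, sum_sub_distrib, ← mul_sum, sum_const, card_univ, Fintype.card_fin,
    nsmul_eq_mul, mul_one]
  ring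

/-- Let `n ≥ 3`, let `a₁, …, aₙ` be pairwise coprime integers with `aᵢ ≥ 2`, let
`a := a₁⋯aₙ`, and for each `i` let `βᵢ` be the unique integer with `0 < βᵢ < aᵢ` and
`aᵢ ∣ 1 + βᵢ·(a/aᵢ)`. Then, as real numbers,
`R(a₁,…,aₙ) = 2·(1/a + Σᵢ βᵢ/aᵢ) - 3`. -/
theorem stmt_14 (n : ℕ) (hn : 3 ≤ n) (a : Fin n → ℕ)
    (ha2 : ∀ i, 2 ≤ a i)
    (hcop : ∀ i j, i ≠ j → Nat.Coprime (a i) (a j))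
    (β : Fin n → ℕ)
    (hβpos : ∀ i, 0 < β i) (hβlt : ∀ i, β i < a i)
    (hβ : ∀ i, a i ∣ 1 + β i * ((∏ j, a j) / a i)) :
    FSR n a = 2 * (1 / (∏ j, (a j : ℝ)) + ∑ i, (β i : ℝ) / (a i : ℝ)) - 3 :=
  stmt_14_general n a β hβpos hβlt hβ
end
end
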